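/- arXiv:1711.05356 — 3 statements merged into one kernel-verified Lean document; each statement's English description precedes it below -/
import Mathlib

section
/- Let N = 2^n and let B ⊆ {0,...,N-1} be reciprocal (contains 0 and is downward closed under bitwise domination). Then for any two vectors u, v ∈ GF(2)^N that agree on all coordinates indexed by B^c, the vectors u·G_N and v·G_N agree on all coordinates indexed by B^c. (Assigning arbitrary values on the punctured-index coordinates does not affect the unpunctured coded bits.) -/
/-! The entry `(G_N)_{i,j}` vanishes unless `j ≼ i`, so the coded bit `(u G_N)_j` only reads
the inputs `u_i` with `j ≼ i`. For `j ∉ B` all such `i` lie outside `B` as well, since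
`B` is downward closed, and there `u` and `v` agree. -/

/-- The 2×2 Arikan kernel over GF(2). -/
def G2 : Matrix (Fin 2) (Fin 2) (ZMod 2) := !![1, 0; 1, 1]

/-- Entry `(i,j)` of the `n`-fold Kronecker power `G_2^{⊗n}` of the Arikan kernel,
under the standard index identification `i = Σ_k b_k(i) 2^k`:
`(G_2^{⊗n})_{i,j} = ∏_k (G_2)_{b_k(i), b_k(j)}`. -/
def Gnat (n : ℕ) (i j : ℕ) : ZMod 2 :=
  ∏ k ∈ Finset.range n,
    G2 (if Nat.testBit i k then 1 else 0) (if Nat.testBit j k then 1 else 0)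

/-- The matrix `G_N = G_2^{⊗n}` (with `N = 2^n`) over GF(2). -/
def GN (n : ℕ) : Matrix (Fin (2 ^ n)) (Fin (2 ^ n)) (ZMod 2) :=
  Matrix.of fun i j => Gnat n i.val j.val

/-- `Dom j i` : the binary expansion of `j` is bitwise dominated by that of `i`. -/
def Dom (j i : ℕ) : Prop := ∀ k, Nat.testBit j k = true → Nat.testBit i k = true

/-- The bit-permutation map on `{0,...,2^n-1}` induced by a permutation `σ` of
the `n` bit positions: bit `k` of the output is bit `σ(k)` of the input. -/
def bperm (n : ℕ) (σ : Equiv.Perm (Fin n)) (i : ℕ) : ℕ :=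
  ∑ k : Fin n, if Nat.testBit i (σ k) then 2 ^ (k : ℕ) else 0

theorem Matrix.vecMul_apply_eq_of_eq_of_ne_zero {m n R : Type*} [Fintype m]
    [NonUnitalNonAssocSemiring R] {u v : m → R} {M : Matrix m n R} {j : n}
    (h : ∀ i, M i j ≠ 0 → u i = v i) : Matrix.vecMul u M j = Matrix.vecMul v M j := by
  refine Finset.sum_congr rfl fun i _ => ?_
  by_cases hM : M i j = 0
  · simp only [hM, mul_zero]
  · rw [h i hM]

/-- A zero bit of `i` facing a one bit of `j` contributes the factor `(G_2)_{0,1} = 0`. -/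
theorem Gnat_eq_zero_of_not_dom {n i j : ℕ} (hj : j < 2 ^ n) (hdom : ¬Dom j i) :
    Gnat n i j = 0 := by
  obtain ⟨k, hjk, hik⟩ : ∃ k, j.testBit k = true ∧ i.testBit k = false := by
    simpa [Dom] using hdom
  have hkn : k < n := by
    by_contra! hnk
    simp [Nat.testBit_eq_false_of_lt (hj.trans_le (Nat.pow_le_pow_right two_pos hnk))] at hjk
  refine Finset.prod_eq_zero (Finset.mem_range.mpr hkn) ?_
  simp [hjk, hik, G2]

theorem dom_of_GN_apply_ne_zero {n : ℕ} {i j : Fin (2 ^ n)} (h : GN n i j ≠ 0) :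
    Dom j.val i.val :=
  not_not.mp fun hdom => h (Gnat_eq_zero_of_not_dom j.isLt hdom)

theorem stmt_10_general (n : ℕ) (B : Set (Fin (2 ^ n)))
    (hdc : ∀ i ∈ B, ∀ j : Fin (2 ^ n), Dom j.val i.val → j ∈ B) :
    ∀ u v : Fin (2 ^ n) → ZMod 2, (∀ i, i ∉ B → u i = v i) →
      ∀ j : Fin (2 ^ n), j ∉ B →
        Matrix.vecMul u (GN n) j = Matrix.vecMul v (GN n) j := by
  intro u v huv j hj
  refine Matrix.vecMul_apply_eq_of_eq_of_ne_zero fun i hG => huv i fun hi => ?_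
  exact hj (hdc i hi j (dom_of_GN_apply_ne_zero hG))

/-- for a reciprocal `B`, if two input vectors agree on all
coordinates indexed by `B^c`, then their encodings `u·G_N`, `v·G_N` agree on
all coordinates indexed by `B^c`. -/
theorem stmt_10 (n : ℕ) (B : Set (Fin (2 ^ n)))
    (h0 : (⟨0, Nat.two_pow_pos n⟩ : Fin (2 ^ n)) ∈ B)
    (hdc : ∀ i ∈ B, ∀ j : Fin (2 ^ n), Dom j.val i.val → j ∈ B) :
    ∀ u v : Fin (2 ^ n) → ZMod 2, (∀ i, i ∉ B → u i = v i) →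
      ∀ j : Fin (2 ^ n), j ∉ B →
        Matrix.vecMul u (GN n) j = Matrix.vecMul v (GN n) j :=
  stmt_10_general n B hdc
end

section
/- Let N = 2^n. The zero-location set of the quasi-uniform puncturing pattern, defined as the image of {0,...,N-N_p-1} under the bit-reversal permutation, is reciprocal: it contains 0 and is downward closed under bitwise domination. -/
theorem Nat.testBit_sum_two_pow (s : Finset ℕ) (m : ℕ) :
    (∑ i ∈ s, 2 ^ i).testBit m = true ↔ m ∈ s := by
  rw [← Nat.mem_bitIndices, ← List.mem_toFinset, Finset.toFinset_bitIndices_sum_two_pow]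

section bperm

variable {n : ℕ} (σ : Equiv.Perm (Fin n))

theorem bperm_eq_sum_two_pow (i : ℕ) :
    bperm n σ i = ∑ k ∈ (Finset.univ.filter fun k : Fin n => i.testBit (σ k)).map
      Fin.valEmbedding, 2 ^ k := by
  rw [Finset.sum_map, Finset.sum_filter, bperm]
  rfl

theorem testBit_bperm (i m : ℕ) :
    (bperm n σ i).testBit m = true ↔ ∃ h : m < n, i.testBit (σ ⟨m, h⟩) = true := by
  rw [bperm_eq_sum_two_pow, Nat.testBit_sum_two_pow]
  simp [Fin.exists_iff]

theorem bperm_lt_two_pow (i : ℕ) : bperm n σ i < 2 ^ n := by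
  refine Nat.lt_pow_two_of_testBit _ fun m hm => ?_
  rw [Bool.eq_false_iff, ne_eq, testBit_bperm]
  rintro ⟨h, -⟩
  omega

theorem bperm_symm_bperm {i : ℕ} (hi : i < 2 ^ n) : bperm n σ.symm (bperm n σ i) = i := by
  refine Nat.eq_of_testBit_eq fun m => Bool.eq_iff_iff.2 ?_
  by_cases hm : m < n
  · simp [testBit_bperm, hm]
  · rw [Nat.testBit_lt_two_pow (hi.trans_le (Nat.pow_le_pow_right two_pos (not_lt.1 hm)))]
    simp [testBit_bperm, hm]

theorem Dom.bperm_symm {i j : ℕ} (h : Dom j (bperm n σ i)) : Dom (bperm n σ.symm j) i := by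
  intro m hm
  obtain ⟨_, hj⟩ := (testBit_bperm σ.symm j m).1 hm
  obtain ⟨_, hi⟩ := (testBit_bperm σ i _).1 (h _ hj)
  simpa using hi

end bperm

/-- the zero-location set of the quasi-uniform puncturing pattern
(the image of `{0,...,N-N_p-1}` under the bit-reversal permutation) is
reciprocal: it contains `0` (assuming `N_p < N`) and is downward closed under
bitwise domination. -/
theorem stmt_13 (n Np : ℕ) (hNp : Np < 2 ^ n) :
    0 ∈ bperm n (Fin.revPerm) '' Set.Iio (2 ^ n - Np) ∧
    ∀ i ∈ bperm n (Fin.revPerm) '' Set.Iio (2 ^ n - Np), ∀ j, Dom j i →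
      j ∈ bperm n (Fin.revPerm) '' Set.Iio (2 ^ n - Np) := by
  refine ⟨⟨0, by simpa using hNp, by simp [bperm]⟩, ?_⟩
  rintro _ ⟨x, hx, rfl⟩ j hj
  have hj_lt : j < 2 ^ n := (Nat.le_of_testBit hj).trans_lt (bperm_lt_two_pow _ x)
  refine ⟨bperm n Fin.revPerm j, ?_, ?_⟩
  · have hdom : Dom (bperm n Fin.revPerm j) x := by simpa using hj.bperm_symm
    exact (Nat.le_of_testBit hdom).trans_lt hx
  · simpa using bperm_symm_bperm Fin.revPerm hj_lt
end

section
/- Let N = 2^n, N̄ = 2^{n̄} with n̄ < n, σ a permutation of the n bit positions, and let B be the image of {0,...,N-N̄-1} under the bit-permutation induced by σ. Then the submatrix G_N(B^c, B^c) (rows and columns restricted to B^c in increasing order) equals G_{N̄}; that is, every bit-permuted successive puncturing pattern with power-of-two complement size is hierarchical. -/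
/-!
Let `T` be the set of bit positions `k` with `σ k < nb`. If `x ∉ B`, its preimage under the bit
permutation is at least `N - N̄`, i.e. has all of its top `n - n̄` bits set, so every bit of `x`
outside `T` is set. Reading off the bits of `x` at the positions of `T`, in increasing order,
is strictly increasing on such `x`, because the most significant bit at which two of them differ
lies in `T`. Composed with the increasing enumeration of `B^c` it is thus a strictly increasing
self-map of `{0, …, N̄ - 1}`, hence the identity. In the product formula for the entries of
`G_N`, the factors at positions outside `T` are `(G_2)_{1,1} = 1`, and the factors at `T` are
those of `G_N̄` at the gathered indices.
-/

namespace Nat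

theorem exists_testBit_of_lt {x y : ℕ} (h : x < y) :
    ∃ i, x.testBit i = false ∧ y.testBit i = true ∧
      ∀ j, i < j → x.testBit j = y.testBit j := by
  obtain ⟨i, hi, habove⟩ := exists_most_significant_bit (Nat.xor_ne_zero_iff.2 h.ne)
  have hagree : ∀ j, i < j → x.testBit j = y.testBit j := fun j hj => by
    simpa [testBit_xor] using habove j hj
  have hne : x.testBit i ≠ y.testBit i := by simpa [testBit_xor] using hi
  have hxi : x.testBit i = false := by
    by_contra hx
    rw [Bool.not_eq_false] at hx
    exact h.not_gt
      (lt_of_testBit i (by simpa [hx] using hne.symm) hx fun j hj => (hagree j hj).symm)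
  exact ⟨i, hxi, by simpa [hxi] using hne.symm, hagree⟩

theorem testBit_of_two_pow_sub_two_pow_le {n m y j : ℕ} (hm : m ≤ n) (hy : y < 2 ^ n)
    (h : 2 ^ n - 2 ^ m ≤ y) (hmj : m ≤ j) (hjn : j < n) : y.testBit j = true := by
  have hpow : 2 ^ (n - m) * 2 ^ m = 2 ^ n := by rw [← pow_add, Nat.sub_add_cancel hm]
  have hq : y / 2 ^ m = 2 ^ (n - m) - 1 := by
    apply le_antisymm
    · have := (Nat.div_lt_iff_lt_mul (by positivity)).2 (hpow ▸ hy)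
      omega
    · rw [Nat.le_div_iff_mul_le (by positivity), Nat.sub_mul, hpow, one_mul]
      exact h
  rw [← Nat.sub_add_cancel hmj, ← testBit_div_two_pow, hq, testBit_two_pow_sub_one,
    decide_eq_true_eq]
  omega

end Nat

def gatherBits {m : ℕ} (p : Fin m → ℕ) (x : ℕ) : ℕ :=
  ∑ a : Fin m, if x.testBit (p a) then 2 ^ (a : ℕ) else 0

section GatherBits

variable {m : ℕ} (p : Fin m → ℕ) (x : ℕ)

theorem gatherBits_eq_sum :
    gatherBits p x =
      ∑ i ∈ (Finset.univ.filter fun a => x.testBit (p a)).map Fin.valEmbedding, 2 ^ i := by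
  rw [Finset.sum_map, Finset.sum_filter]
  rfl

theorem gatherBits_lt : gatherBits p x < 2 ^ m := by
  rw [gatherBits_eq_sum]
  exact Nat.geomSum_lt le_rfl (by simp)

theorem testBit_gatherBits (a : Fin m) : (gatherBits p x).testBit a = x.testBit (p a) := by
  rw [gatherBits_eq_sum, Bool.eq_iff_iff, ← Nat.mem_bitIndices, ← List.mem_toFinset,
    Finset.toFinset_bitIndices_sum_two_pow]
  simp [Fin.val_inj]

end GatherBits

theorem bperm_eq_gatherBits (n : ℕ) (σ : Equiv.Perm (Fin n)) :
    bperm n σ = gatherBits fun k => (σ k : ℕ) := rfl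

theorem bperm_bperm_inv {n x : ℕ} (σ : Equiv.Perm (Fin n)) (hx : x < 2 ^ n) :
    bperm n σ (bperm n σ⁻¹ x) = x := by
  apply Nat.eq_of_testBit_eq
  intro j
  by_cases hj : j < n
  · lift j to Fin n using hj
    simp [bperm_eq_gatherBits, testBit_gatherBits]
  · have hle : 2 ^ n ≤ 2 ^ j := Nat.pow_le_pow_right two_pos (not_lt.1 hj)
    rw [Nat.testBit_lt_two_pow (hx.trans_le hle), bperm_eq_gatherBits,
      Nat.testBit_lt_two_pow ((gatherBits_lt _ _).trans_le hle)]

theorem testBit_of_notMem_bperm_image {n nb x : ℕ} (hn : nb ≤ n) (σ : Equiv.Perm (Fin n))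
    (hx : x < 2 ^ n) (hxB : x ∉ bperm n σ '' Set.Iio (2 ^ n - 2 ^ nb)) {k : Fin n}
    (hk : nb ≤ σ k) : x.testBit k = true := by
  have hy : 2 ^ n - 2 ^ nb ≤ bperm n σ⁻¹ x :=
    not_lt.1 fun hlt => hxB ⟨_, hlt, bperm_bperm_inv σ hx⟩
  have := Nat.testBit_of_two_pow_sub_two_pow_le hn (gatherBits_lt _ _) hy hk (σ k).2
  simpa [bperm_eq_gatherBits, testBit_gatherBits] using this

section Subcube

variable {n m : ℕ} {S : Finset (Fin n)} (hS : S.card = m)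

theorem gatherBits_orderEmbOfFin_lt {x y : ℕ} (hy : y < 2 ^ n)
    (hx : ∀ k ∉ S, x.testBit k = true) (hxy : x < y) :
    gatherBits (fun a => (S.orderEmbOfFin hS a : ℕ)) x <
      gatherBits (fun a => (S.orderEmbOfFin hS a : ℕ)) y := by
  obtain ⟨i, hxi, hyi, hagree⟩ := Nat.exists_testBit_of_lt hxy
  have hin : i < n := by
    by_contra hni
    rw [Nat.testBit_lt_two_pow (hy.trans_le (Nat.pow_le_pow_right two_pos (not_lt.1 hni)))] at hyi
    exact Bool.false_ne_true hyi
  have hiS : (⟨i, hin⟩ : Fin n) ∈ S := by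
    by_contra hiS
    exact Bool.false_ne_true (hxi ▸ hx _ hiS)
  obtain ⟨a, ha⟩ : (⟨i, hin⟩ : Fin n) ∈ Set.range (S.orderEmbOfFin hS) := by
    rwa [Finset.range_orderEmbOfFin]
  refine Nat.lt_of_testBit a ?_ ?_ fun j hj => ?_
  · rwa [testBit_gatherBits, ha]
  · rwa [testBit_gatherBits, ha]
  · by_cases hjm : j < m
    · lift j to Fin m using hjm
      simp only [testBit_gatherBits]
      apply hagree
      have := (S.orderEmbOfFin hS).strictMono (Fin.val_fin_lt.1 hj)
      rwa [ha, Fin.lt_def] at this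
    · have hle : 2 ^ m ≤ 2 ^ j := Nat.pow_le_pow_right two_pos (not_lt.1 hjm)
      rw [Nat.testBit_lt_two_pow ((gatherBits_lt _ _).trans_le hle),
        Nat.testBit_lt_two_pow ((gatherBits_lt _ _).trans_le hle)]

theorem Gnat_eq_Gnat_gatherBits {x y : ℕ} (hx : ∀ k ∉ S, x.testBit k = true)
    (hy : ∀ k ∉ S, y.testBit k = true) :
    Gnat n x y = Gnat m (gatherBits (fun a => (S.orderEmbOfFin hS a : ℕ)) x)
      (gatherBits (fun a => (S.orderEmbOfFin hS a : ℕ)) y) := by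
  rw [Gnat, Gnat, ← Fin.prod_univ_eq_prod_range, ← Fin.prod_univ_eq_prod_range,
    ← Finset.prod_mul_prod_compl S, Finset.prod_eq_one (s := Sᶜ), mul_one]
  · conv_lhs => rw [← S.map_orderEmbOfFin_univ hS, Finset.prod_map]
    simp [testBit_gatherBits]
  · intro k hk
    rw [Finset.mem_compl] at hk
    simp [hx k hk, hy k hk, G2]

end Subcube

theorem card_filter_perm_val_lt {n nb : ℕ} (hn : nb ≤ n) (σ : Equiv.Perm (Fin n)) :
    (Finset.univ.filter fun k : Fin n => (σ k : ℕ) < nb).card = nb := by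
  rw [← Finset.card_map σ.toEmbedding, Finset.map_filter, Finset.map_univ_equiv]
  simpa [Fin.card_filter_val_lt] using hn

/-- every bit-permuted successive puncturing pattern with
power-of-two complement size is hierarchical: for
`B = (bit-permutation image of {0,...,N-N̄-1})` and `e` the increasing
enumeration of `B^c`, the submatrix `G_N(B^c,B^c)` equals `G_N̄`. -/
theorem stmt_19 (n nb : ℕ) (hn : nb < n) (σ : Equiv.Perm (Fin n))
    (B : Set ℕ) (hB : B = bperm n σ '' Set.Iio (2 ^ n - 2 ^ nb))
    (e : Fin (2 ^ nb) → Fin (2 ^ n)) (he : StrictMono e)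
    (hrange : ∀ x : Fin (2 ^ n), x ∈ Set.range e ↔ x.val ∉ B) :
    (GN n).submatrix e e = GN nb := by
  set S := Finset.univ.filter fun k : Fin n => (σ k : ℕ) < nb
  have hS : S.card = nb := card_filter_perm_val_lt hn.le σ
  set g := gatherBits fun a => (S.orderEmbOfFin hS a : ℕ)
  have hC : ∀ i, ∀ k ∉ S, (e i : ℕ).testBit k = true := fun i k hk =>
    testBit_of_notMem_bperm_image hn.le σ (e i).2 (hB ▸ (hrange _).1 ⟨i, rfl⟩)
      (by simpa [S] using hk)
  have hg : ∀ i, g (e i) = i := by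
    have hmono : StrictMono fun i => (⟨g (e i), gatherBits_lt _ _⟩ : Fin (2 ^ nb)) :=
      fun i j hij => gatherBits_orderEmbOfFin_lt hS (e j).2 (hC i) (he hij)
    exact fun i => congrArg Fin.val (congrFun hmono.eq_id i)
  ext i j
  simp only [GN, Matrix.submatrix_apply, Matrix.of_apply]
  rw [Gnat_eq_Gnat_gatherBits hS (hC i) (hC j)]
  exact congrArg₂ (Gnat nb) (hg i) (hg j)
end
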